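/- Let R be a commutative ring. If γ_t(Γ(R)) = 2 and R is not isomorphic to Z₂ × D for any domain D, then γ(Γ(R)) = 2. -/

import Mathlib

/-- Vertices of the zero-divisor graph: nonzero zero-divisors. -/
def zdVerts (R : Type*) [CommRing R] : Set R :=
  {x | x ≠ 0 ∧ ∃ y ≠ 0, x * y = 0}

/-- The set of all zero-divisors (including 0 when R is nontrivial). -/
def zdSet (R : Type*) [CommRing R] : Set R :=
  {x | ∃ y ≠ 0, x * y = 0}

/-- A dominating set of the zero-divisor graph Γ(R) (loops allowed: `x` is
adjacent to itself iff `x^2 = 0`). -/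
def IsDomSet (R : Type*) [CommRing R] (X : Set R) : Prop :=
  X ⊆ zdVerts R ∧ ∀ v ∈ zdVerts R, v ∉ X → ∃ x ∈ X, x * v = 0

/-- A total dominating set of Γ(R): every vertex has a neighbor in `X`
(possibly itself, if looped). -/
def IsTotDomSet (R : Type*) [CommRing R] (X : Set R) : Prop :=
  X ⊆ zdVerts R ∧ ∀ v ∈ zdVerts R, ∃ x ∈ X, x * v = 0

/-- The domination number γ(Γ(R)), as a cardinal. -/
noncomputable def domNum (R : Type*) [CommRing R] : Cardinal :=
  ⨅ X : {X : Set R // IsDomSet R X}, Cardinal.mk X.1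

/-- The total domination number γ_t(Γ(R)), as a cardinal. -/
noncomputable def totDomNum (R : Type*) [CommRing R] : Cardinal :=
  ⨅ X : {X : Set R // IsTotDomSet R X}, Cardinal.mk X.1

/-- The zero-divisor graph as a simple graph (loops discarded), used for girth. -/
def zdGraph (R : Type*) [CommRing R] : SimpleGraph R where
  Adj r s := r ≠ s ∧ r ≠ 0 ∧ s ≠ 0 ∧ r * s = 0
  symm := by constructor; intro r s h; exact ⟨h.1.symm, h.2.2.1, h.2.1, by rw [mul_comm]; exact h.2.2.2⟩
  loopless := by constructor; intro r h; exact h.1 rfl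


/-!
A dominating set with at most one element is either empty, which forces `Γ(R)` to have no
vertices, or a single universal vertex `x`. If `x² = 0` then `{x}` is even a total dominating set,
and both cases contradict `γ_t(Γ(R)) = 2`. If `x² ≠ 0`, the Anderson–Livingston argument shows
that `x` is an idempotent with `xR = {0, x}` whose annihilator `(1 - x)R` has no zero-divisors,
so `R ≅ R/(1 - x) × R/(x) ≅ ℤ₂ × D` with `D` a domain. Hence `γ(Γ(R)) ≥ 2`, while
`γ(Γ(R)) ≤ γ_t(Γ(R)) = 2` holds since every total dominating set is dominating.
-/

universe u

section Domination

variable {R : Type*} [CommRing R]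

theorem IsTotDomSet.isDomSet {X : Set R} (hX : IsTotDomSet R X) : IsDomSet R X :=
  ⟨hX.1, fun v hv _ => hX.2 v hv⟩

theorem IsDomSet.isTotDomSet_empty (h : IsDomSet R ∅) : IsTotDomSet R ∅ := by
  refine ⟨h.1, fun v hv => ?_⟩
  obtain ⟨x, hx, -⟩ := h.2 v hv (Set.notMem_empty v)
  exact absurd hx (Set.notMem_empty x)

variable (R) in
theorem isTotDomSet_zdVerts : IsTotDomSet R (zdVerts R) := by
  refine ⟨subset_rfl, fun v ⟨hv, y, hy, hvy⟩ => ⟨y, ⟨hy, v, hv, by rw [mul_comm, hvy]⟩, ?_⟩⟩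
  rw [mul_comm, hvy]

theorem totDomNum_le_mk {X : Set R} (hX : IsTotDomSet R X) : totDomNum R ≤ Cardinal.mk X :=
  ciInf_le (OrderBot.bddBelow _) (⟨X, hX⟩ : {X : Set R // IsTotDomSet R X})

variable (R) in
theorem domNum_le_totDomNum : domNum R ≤ totDomNum R := by
  have : Nonempty {X : Set R // IsTotDomSet R X} := ⟨⟨zdVerts R, isTotDomSet_zdVerts R⟩⟩
  exact le_ciInf fun X => ciInf_le (OrderBot.bddBelow _) (⟨X.1, X.2.isDomSet⟩ : {X // IsDomSet R X})

end Domination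

section UniversalVertex

variable {R : Type*} [CommRing R] {e : R}

def IsUniversalVertex (R : Type*) [CommRing R] (x : R) : Prop :=
  x ∈ zdVerts R ∧ ∀ v ∈ zdVerts R, v ≠ x → x * v = 0

theorem isUniversalVertex_of_isDomSet_singleton (h : IsDomSet R {e}) : IsUniversalVertex R e := by
  refine ⟨h.1 rfl, fun v hv hve => ?_⟩
  obtain ⟨x, rfl, hxv⟩ := h.2 v hv hve
  exact hxv

theorem IsUniversalVertex.isTotDomSet_singleton (h : IsUniversalVertex R e) (he : e * e = 0) :
    IsTotDomSet R {e} := by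
  refine ⟨Set.singleton_subset_iff.mpr h.1, fun v hv => ⟨e, rfl, ?_⟩⟩
  by_cases hve : v = e
  · rwa [hve]
  · exact h.2 v hv hve

theorem IsUniversalVertex.eq_of_mul_ne_zero (h : IsUniversalVertex R e) {v y : R}
    (hv : e * v ≠ 0) (hy : y ≠ 0) (hvy : v * y = 0) : v = e := by
  by_contra hne
  exact hv (h.2 v ⟨fun hv0 => hv (by rw [hv0, mul_zero]), y, hy, hvy⟩ hne)

theorem IsUniversalVertex.isIdempotentElem (h : IsUniversalVertex R e) (hsq : e * e ≠ 0) :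
    IsIdempotentElem e := by
  by_contra hne
  obtain ⟨-, y, hy, hey⟩ := h.1
  have hcube : e * (e * e) = 0 := by
    by_contra hcube
    exact hne (h.eq_of_mul_ne_zero hcube hy (by rw [mul_assoc, hey, mul_zero]))
  -- `z = e + e²` is a vertex (`z e² = 0`) with `e z = e² ≠ 0`, so `z = e`, i.e. `e² = 0`.
  have hz : e + e * e = e := by
    refine h.eq_of_mul_ne_zero (y := e * e) ?_ hsq ?_
    · rwa [mul_add, hcube, add_zero]
    · linear_combination (1 + e) * hcube
  exact hsq (by linear_combination hz)

theorem ne_one_of_mem_zdVerts (he : e ∈ zdVerts R) : e ≠ 1 := by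
  rintro rfl
  obtain ⟨-, y, hy, h1y⟩ := he
  exact hy (by rwa [one_mul] at h1y)

theorem IsUniversalVertex.mul_eq_zero_or_eq_self (h : IsUniversalVertex R e)
    (he : IsIdempotentElem e) (r : R) : e * r = 0 ∨ e * r = e := by
  refine or_iff_not_imp_left.mpr fun hr => h.eq_of_mul_ne_zero (y := 1 - e) ?_ ?_ ?_
  · rwa [← mul_assoc, he.eq]
  · exact sub_ne_zero.mpr (ne_one_of_mem_zdVerts h.1).symm
  · linear_combination (-r) * he.eq

theorem IsUniversalVertex.eq_zero_of_mul_eq_zero (h : IsUniversalVertex R e)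
    (he : IsIdempotentElem e) {a b : R} (hea : e * a = 0) (heb : e * b = 0) (hab : a * b = 0) :
    a = 0 ∨ b = 0 := by
  refine or_iff_not_imp_right.mpr fun hb => ?_
  have he0 : e ≠ 0 := h.1.1
  -- `a + e` is killed by `b` but not by `e`.
  have hae : a + e = e := by
    refine h.eq_of_mul_ne_zero ?_ hb ?_
    · rwa [mul_add, hea, zero_add, he.eq]
    · linear_combination hab + heb
  exact add_eq_right.mp hae

theorem IsIdempotentElem.mem_span_one_sub_iff (he : IsIdempotentElem e) {r : R} :
    r ∈ Ideal.span {1 - e} ↔ r * e = 0 := by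
  rw [← he.ker_toSpanSingleton_eq_span, LinearMap.mem_ker, LinearMap.toSpanSingleton_apply,
    smul_eq_mul]

theorem IsIdempotentElem.mem_span_iff (he : IsIdempotentElem e) {r : R} :
    r ∈ Ideal.span {e} ↔ r * (1 - e) = 0 := by
  simpa using he.one_sub.mem_span_one_sub_iff (r := r)

theorem IsUniversalVertex.isPrime_span (h : IsUniversalVertex R e) (he : IsIdempotentElem e) :
    (Ideal.span {e}).IsPrime := by
  refine Ideal.isPrime_iff.mpr ⟨fun htop => ?_, fun {a b} hab => ?_⟩
  · have h1 : (1 : R) ∈ Ideal.span {e} := htop ▸ Submodule.mem_top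
    rw [he.mem_span_iff, one_mul, sub_eq_zero] at h1
    exact ne_one_of_mem_zdVerts h.1 h1.symm
  · simp only [he.mem_span_iff] at hab ⊢
    refine h.eq_zero_of_mul_eq_zero he ?_ ?_ ?_
    · linear_combination (-a) * he.eq
    · linear_combination (-b) * he.eq
    · linear_combination hab + a * b * he.eq

theorem IsIdempotentElem.card_quotient_span_one_sub (he : IsIdempotentElem e) (he0 : e ≠ 0)
    (hdich : ∀ r, e * r = 0 ∨ e * r = e) : Nat.card (R ⧸ Ideal.span {1 - e}) = 2 := by
  refine Nat.card_eq_two_iff.mpr ⟨0, 1, fun h01 => he0 ?_, Set.eq_univ_of_forall fun q => ?_⟩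
  · rwa [← map_zero (Ideal.Quotient.mk _), ← map_one (Ideal.Quotient.mk _), Ideal.Quotient.eq,
      he.mem_span_one_sub_iff, zero_sub, neg_mul, one_mul, neg_eq_zero] at h01
  · obtain ⟨r, rfl⟩ := Ideal.Quotient.mk_surjective q
    rcases hdich r with hr | hr
    · left
      rw [← map_zero (Ideal.Quotient.mk _), Ideal.Quotient.eq, he.mem_span_one_sub_iff]
      linear_combination hr
    · right
      rw [Set.mem_singleton_iff, ← map_one (Ideal.Quotient.mk _), Ideal.Quotient.eq,
        he.mem_span_one_sub_iff]
      linear_combination hr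

theorem IsUniversalVertex.nonempty_ringEquiv_zmod_two_prod (h : IsUniversalVertex R e)
    (he : IsIdempotentElem e) : Nonempty (R ≃+* ZMod 2 × (R ⧸ Ideal.span {e})) := by
  have hcard := he.card_quotient_span_one_sub h.1.1 (h.mul_eq_zero_or_eq_self he)
  have : Finite (R ⧸ Ideal.span {1 - e}) := Nat.finite_of_card_ne_zero (by omega)
  let := Fintype.ofFinite (R ⧸ Ideal.span {1 - e})
  let toZMod : R ⧸ Ideal.span {1 - e} ≃+* ZMod 2 :=
    (ZMod.ringEquivOfPrime (R ⧸ Ideal.span {1 - e}) Nat.prime_two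
      (by rwa [← Nat.card_eq_fintype_card])).symm
  have hsplit := RingHom.prod_bijective_of_isIdempotentElem he.one_sub he (sub_add_cancel 1 e)
    (by linear_combination -he.eq)
  exact ⟨(RingEquiv.ofBijective _ hsplit).trans (toZMod.prodCongr (RingEquiv.refl _))⟩

end UniversalVertex

theorem stmt_7 (R : Type u) [CommRing R]
    (h2 : totDomNum R = 2)
    (hni : ∀ (D : Type u) [CommRing D] [IsDomain D], ¬ Nonempty (R ≃+* ZMod 2 × D)) :
    domNum R = 2 := by
  have : Nonempty {X : Set R // IsDomSet R X} :=
    ⟨⟨zdVerts R, (isTotDomSet_zdVerts R).isDomSet⟩⟩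
  refine le_antisymm (h2 ▸ domNum_le_totDomNum R) (le_ciInf fun ⟨X, hX⟩ => ?_)
  have two_le_mk {Y : Set R} (hY : IsTotDomSet R Y) : 2 ≤ Cardinal.mk Y :=
    h2 ▸ totDomNum_le_mk hY
  rw [Cardinal.two_le_iff_one_lt, Cardinal.one_lt_iff_nontrivial, Set.nontrivial_coe_sort]
  by_contra hX1
  obtain rfl | ⟨x, rfl⟩ := (Set.not_nontrivial_iff.mp hX1).eq_empty_or_singleton
  · simpa using two_le_mk hX.isTotDomSet_empty
  have hx := isUniversalVertex_of_isDomSet_singleton hX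
  by_cases hsq : x * x = 0
  · simpa using two_le_mk (hx.isTotDomSet_singleton hsq)
  have hidem := hx.isIdempotentElem hsq
  have := hx.isPrime_span hidem
  exact hni (R ⧸ Ideal.span {x}) (hx.nonempty_ringEquiv_zmod_two_prod hidem)
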